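/- Let X be a cluster-tilting subcategory of a triangulated category C with split idempotents, and let A₀ →f₀ A₁ →f₁ A₂ →f₂ ΣA₀ be a distinguished triangle in C. If f̄₂ = 0 in C/X (i.e. f₂ factors through an object of X), then in the quotient category C/X the morphism f̄₁ is a cokernel of f̄₀; equivalently, the sequence A₀ → A₁ → A₂ → 0 is right exact in C/X. -/

import Mathlib

open CategoryTheory CategoryTheory.Limits CategoryTheory.Pretriangulated

universe v u

variable {C : Type u} [Category.{v} C] [Preadditive C] [HasZeroObject C]
  [HasShift C ℤ] [∀ n : ℤ, (shiftFunctor C n).Additive] [Pretriangulated C]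

/-- `f` factors through an object satisfying `X`. -/
def FactorsThru (X : C → Prop) {A B : C} (f : A ⟶ B) : Prop :=
  ∃ (X₀ : C) (g : A ⟶ X₀) (h : X₀ ⟶ B), X X₀ ∧ g ≫ h = f

/-- The hom relation on `C` identifying two morphisms when their difference factors
through an object of `X`; the quotient category `C/X` is the quotient by this relation. -/
def homRelOf (X : C → Prop) : HomRel C :=
  fun {A B : C} (f g : A ⟶ B) => FactorsThru X (f - g)

/-- The additive quotient category `C/X`. -/
abbrev QuotCat (X : C → Prop) := CategoryTheory.Quotient (homRelOf X)

/-- The quotient functor `C ⥤ C/X`, sending a morphism `f` to its class `f̄`. -/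
abbrev quotFunctor (X : C → Prop) : C ⥤ QuotCat X := Quotient.functor _

/-- `X` is a full additive subcategory: it contains the zero objects and is closed under
isomorphisms, finite direct sums and direct summands. -/
structure IsAdditiveClosed (X : C → Prop) : Prop where
  zero : ∀ Z : C, IsZero Z → X Z
  iso : ∀ {A B : C}, (A ≅ B) → X A → X B
  biprod : ∀ {A B : C} (b : BinaryBicone A B), Nonempty b.IsBilimit → X A → X B → X b.pt
  summand : ∀ {A B : C} (i : A ⟶ B) (p : B ⟶ A), i ≫ p = 𝟙 A → X B → X A

/-- `X` is a cluster-tilting subcategory of the triangulated category `C`: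
it is a full additive subcategory such that (i) `Hom(X₁, ΣX₂) = 0` for all `X₁, X₂ ∈ X`, and
(ii) every object `A` fits into a distinguished triangle `X₀ ⟶ X₁ ⟶ A ⟶ ΣX₀` with
`X₀, X₁ ∈ X`. -/
structure IsClusterTilting (X : C → Prop) extends IsAdditiveClosed X : Prop where
  hom_shift_zero : ∀ {X₁ X₂ : C}, X X₁ → X X₂ → ∀ f : X₁ ⟶ X₂⟦(1 : ℤ)⟧, f = 0
  exists_triangle : ∀ A : C, ∃ (X₀ X₁ : C) (f : X₀ ⟶ X₁) (g : X₁ ⟶ A) (h : A ⟶ X₀⟦(1 : ℤ)⟧),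
    X X₀ ∧ X X₁ ∧ Triangle.mk f g h ∈ distTriang C

/-- `f : A ⟶ B` is `X`-monic: every morphism from `A` to an object of `X` factors through `f`. -/
def XMonic (X : C → Prop) {A B : C} (f : A ⟶ B) : Prop :=
  ∀ X' : C, X X' → ∀ u : A ⟶ X', ∃ v : B ⟶ X', f ≫ v = u

/-- `f : A ⟶ B` is `X`-epic: every morphism from an object of `X` to `B` factors through `f`. -/
def XEpic (X : C → Prop) {A B : C} (f : A ⟶ B) : Prop :=
  ∀ X' : C, X X' → ∀ u : X' ⟶ B, ∃ v : X' ⟶ A, v ≫ f = u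

/-!
Since `Hom(X, ΣX) = 0` and `f₂` factors through `X`, every map `A₀ ⟶ X'` with `X' ∈ X` extends
along `f₀`. With the long exact `Hom(-, Z)`-sequence of the triangle this turns any `p` with
`f₀ ≫ p` factoring through `X` into `k ≫ h + f₁ ≫ ψ`, which gives existence. For uniqueness,
`f̄₁` is epic: if `f₁ ≫ d` factors through `X`, lift it through the right `X`-approximation
`Y₁ ⟶ Z` of a triangle `Y₀ ⟶ Y₁ ⟶ Z ⟶ ΣY₀`; the same decomposition, applied with `Y₀ ∈ X`,
shows that `d - t ≫ q` is killed by `f₁`, hence factors through `f₂`.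
-/

variable {X : C → Prop}

namespace FactorsThru

lemma zero (hX : IsAdditiveClosed X) (A B : C) : FactorsThru X (0 : A ⟶ B) := by
  obtain ⟨Z, hZ⟩ := HasZeroObject.zero (C := C)
  exact ⟨Z, 0, 0, hX.zero Z hZ, by simp⟩

lemma comp_left {A B D : C} (w : A ⟶ B) {f : B ⟶ D} (hf : FactorsThru X f) :
    FactorsThru X (w ≫ f) := by
  obtain ⟨X₀, g, h, hX₀, rfl⟩ := hf
  exact ⟨X₀, w ≫ g, h, hX₀, by simp⟩

lemma comp_right {A B D : C} {f : A ⟶ B} (w : B ⟶ D) (hf : FactorsThru X f) :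
    FactorsThru X (f ≫ w) := by
  obtain ⟨X₀, g, h, hX₀, rfl⟩ := hf
  exact ⟨X₀, g, h ≫ w, hX₀, by simp⟩

lemma neg {A B : C} {f : A ⟶ B} (hf : FactorsThru X f) : FactorsThru X (-f) := by
  obtain ⟨X₀, g, h, hX₀, rfl⟩ := hf
  exact ⟨X₀, g, -h, hX₀, by simp⟩

lemma add (hX : IsAdditiveClosed X) {A B : C} {f g : A ⟶ B}
    (hf : FactorsThru X f) (hg : FactorsThru X g) : FactorsThru X (f + g) := by
  obtain ⟨X₁, g₁, h₁, hX₁, rfl⟩ := hf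
  obtain ⟨X₂, g₂, h₂, hX₂, rfl⟩ := hg
  exact ⟨X₁ ⊞ X₂, biprod.lift g₁ g₂, biprod.desc h₁ h₂,
    hX.biprod _ ⟨BinaryBiproduct.isBilimit X₁ X₂⟩ hX₁ hX₂, biprod.lift_desc ..⟩

end FactorsThru

lemma congruence_homRelOf (hX : IsAdditiveClosed X) : Congruence (homRelOf X) where
  equivalence :=
    { refl := fun _ => by simpa [homRelOf] using FactorsThru.zero hX _ _
      symm := fun h => by simpa [homRelOf] using h.neg
      trans := fun h₁ h₂ => by simpa [homRelOf] using h₁.add hX h₂ }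
  comp_left := fun w _ _ h => by simpa [homRelOf, Preadditive.comp_sub] using h.comp_left w
  comp_right := fun w h => by simpa [homRelOf, Preadditive.sub_comp] using h.comp_right w

lemma quotFunctor_map_eq_iff (hX : IsAdditiveClosed X) {A B : C} (f g : A ⟶ B) :
    (quotFunctor X).map f = (quotFunctor X).map g ↔ FactorsThru X (f - g) :=
  have := congruence_homRelOf hX
  Quotient.functor_map_eq_iff _ f g

lemma xEpic_mor₂_of_mem_obj₁ (hX : IsClusterTilting X) {Y₀ Y₁ Z : C} {i : Y₀ ⟶ Y₁} {q : Y₁ ⟶ Z}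
    {r : Z ⟶ Y₀⟦(1 : ℤ)⟧} (hT : Triangle.mk i q r ∈ distTriang C) (hY₀ : X Y₀) : XEpic X q := by
  intro X' hX' v
  obtain ⟨v', hv'⟩ := Triangle.coyoneda_exact₃ _ hT v (hX.hom_shift_zero hX' hY₀ _)
  exact ⟨v', hv'.symm⟩

section Triangle

variable (hX : IsClusterTilting X) {A₀ A₁ A₂ : C} {f₀ : A₀ ⟶ A₁} {f₁ : A₁ ⟶ A₂}
  {f₂ : A₂ ⟶ A₀⟦(1 : ℤ)⟧} (hT : Triangle.mk f₀ f₁ f₂ ∈ distTriang C) (hf₂ : FactorsThru X f₂)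
include hX hT hf₂

lemma xMonic_mor₁_of_factorsThru_mor₃ : XMonic X f₀ := by
  intro X' hX' e
  obtain ⟨X₀, a, b, hX₀, rfl⟩ := hf₂
  have hz : (a ≫ b) ≫ e⟦(1 : ℤ)⟧' = 0 := by
    rw [Category.assoc, hX.hom_shift_zero hX₀ hX' (b ≫ e⟦(1 : ℤ)⟧'), comp_zero]
  obtain ⟨g, hg⟩ : ∃ g : A₁⟦(1 : ℤ)⟧ ⟶ X'⟦(1 : ℤ)⟧, e⟦(1 : ℤ)⟧' = (-f₀⟦(1 : ℤ)⟧') ≫ g :=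
    Triangle.yoneda_exact₃ _ (rot_of_distTriang _ hT) _ hz
  obtain ⟨g', rfl⟩ := (shiftFunctor C (1 : ℤ)).map_surjective g
  exact ⟨-g', (shiftFunctor C (1 : ℤ)).map_injective (by simp [hg])⟩

lemma exists_eq_comp_add_mor₂_comp {X' Z : C} (hX' : X X') {g : A₀ ⟶ X'} {h : X' ⟶ Z}
    {p : A₁ ⟶ Z} (hp : f₀ ≫ p = g ≫ h) : ∃ (k : A₁ ⟶ X') (ψ : A₂ ⟶ Z), p = k ≫ h + f₁ ≫ ψ := by
  obtain ⟨k, hk⟩ := xMonic_mor₁_of_factorsThru_mor₃ hX hT hf₂ X' hX' g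
  obtain ⟨ψ, hψ⟩ : ∃ ψ : A₂ ⟶ Z, p - k ≫ h = f₁ ≫ ψ := Triangle.yoneda_exact₂ _ hT (p - k ≫ h)
    (by change f₀ ≫ _ = 0; rw [Preadditive.comp_sub, ← Category.assoc, hk, hp, sub_self])
  exact ⟨k, ψ, by rw [← hψ]; abel⟩

lemma factorsThru_of_factorsThru_mor₂_comp {Z : C} {d : A₂ ⟶ Z}
    (hd : FactorsThru X (f₁ ≫ d)) : FactorsThru X d := by
  obtain ⟨X'', u, v, hX'', huv⟩ := hd
  obtain ⟨Y₀, Y₁, i, q, r, hY₀, hY₁, hTZ⟩ := hX.exists_triangle Z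
  obtain ⟨v', rfl⟩ := xEpic_mor₂_of_mem_obj₁ hX hTZ hY₀ X'' hX'' v
  have h₀₁ : f₀ ≫ f₁ = 0 := comp_distTriang_mor_zero₁₂ _ hT
  have hiq : i ≫ q = 0 := comp_distTriang_mor_zero₁₂ _ hTZ
  obtain ⟨e, he⟩ : ∃ e : A₀ ⟶ Y₀, f₀ ≫ u ≫ v' = e ≫ i :=
    Triangle.coyoneda_exact₂ _ hTZ _ (by
      change (f₀ ≫ u ≫ v') ≫ q = 0
      rw [Category.assoc, Category.assoc, huv, reassoc_of% h₀₁, zero_comp])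
  obtain ⟨e', t, hs⟩ := exists_eq_comp_add_mor₂_comp hX hT hf₂ hY₀ he
  obtain ⟨w, hw⟩ : ∃ w : A₀⟦(1 : ℤ)⟧ ⟶ Z, d - t ≫ q = f₂ ≫ w :=
    Triangle.yoneda_exact₃ _ hT _ (by
      change f₁ ≫ (d - t ≫ q) = 0
      rw [Preadditive.comp_sub, ← huv, reassoc_of% hs, Preadditive.add_comp, Category.assoc,
        hiq, comp_zero, zero_add, Category.assoc, sub_self])
  rw [show d = f₂ ≫ w + t ≫ q by rw [← hw]; abel]
  exact (hf₂.comp_right w).add hX.toIsAdditiveClosed ⟨Y₁, t, q, hY₁, rfl⟩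

lemma epi_quotFunctor_map_mor₂ : Epi ((quotFunctor X).map f₁) := by
  constructor
  rintro ⟨Z⟩ a b hab
  obtain ⟨a, rfl⟩ := (quotFunctor X).map_surjective a
  obtain ⟨b, rfl⟩ := (quotFunctor X).map_surjective b
  simp only [← Functor.map_comp, quotFunctor_map_eq_iff hX.toIsAdditiveClosed,
    ← Preadditive.comp_sub] at hab ⊢
  exact factorsThru_of_factorsThru_mor₂_comp hX hT hf₂ hab

lemma exists_quotFunctor_map_mor₂_comp_eq {Z : C}
    (φ : (quotFunctor X).obj A₁ ⟶ (quotFunctor X).obj Z)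
    (hφ : (quotFunctor X).map f₀ ≫ φ = (quotFunctor X).map (0 : A₀ ⟶ Z)) :
    ∃ ψ, (quotFunctor X).map f₁ ≫ ψ = φ := by
  obtain ⟨p, rfl⟩ := (quotFunctor X).map_surjective φ
  rw [← Functor.map_comp, quotFunctor_map_eq_iff hX.toIsAdditiveClosed, sub_zero] at hφ
  obtain ⟨X', g, h, hX', hgh⟩ := hφ
  obtain ⟨k, ψ, rfl⟩ := exists_eq_comp_add_mor₂_comp hX hT hf₂ hX' hgh.symm
  refine ⟨(quotFunctor X).map ψ, ?_⟩
  rw [← Functor.map_comp, quotFunctor_map_eq_iff hX.toIsAdditiveClosed]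
  exact ⟨X', k, -h, hX', by simp⟩

end Triangle

theorem cokernel_of_factorsThru_general
    (X : C → Prop) (hX : IsClusterTilting X)
    {A₀ A₁ A₂ : C} (f₀ : A₀ ⟶ A₁) (f₁ : A₁ ⟶ A₂) (f₂ : A₂ ⟶ A₀⟦(1 : ℤ)⟧)
    (hT : Triangle.mk f₀ f₁ f₂ ∈ distTriang C)
    (hf₂ : FactorsThru X f₂) :
    (quotFunctor X).map f₀ ≫ (quotFunctor X).map f₁ = (quotFunctor X).map (0 : A₀ ⟶ A₂) ∧
    ∀ (Z : C) (φ : (quotFunctor X).obj A₁ ⟶ (quotFunctor X).obj Z),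
      (quotFunctor X).map f₀ ≫ φ = (quotFunctor X).map (0 : A₀ ⟶ Z) →
      ∃! ψ : (quotFunctor X).obj A₂ ⟶ (quotFunctor X).obj Z,
        (quotFunctor X).map f₁ ≫ ψ = φ := by
  refine ⟨((quotFunctor X).map_comp _ _).symm.trans
    (congrArg _ (comp_distTriang_mor_zero₁₂ _ hT)), fun Z φ hφ => ?_⟩
  obtain ⟨ψ, hψ⟩ := exists_quotFunctor_map_mor₂_comp_eq hX hT hf₂ φ hφ
  exact ⟨ψ, hψ, fun ψ' hψ' => (epi_quotFunctor_map_mor₂ hX hT hf₂).left_cancellation _ _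
    (hψ'.trans hψ.symm)⟩

/-- For a distinguished triangle `A₀ ⟶ A₁ ⟶ A₂ ⟶ ΣA₀` over a cluster-tilting
subcategory `X`, if `f₂` factors through `X` then `f̄₁` is a cokernel of `f̄₀` in `C/X`. -/
theorem cokernel_of_factorsThru [IsIdempotentComplete C]
    (X : C → Prop) (hX : IsClusterTilting X)
    {A₀ A₁ A₂ : C} (f₀ : A₀ ⟶ A₁) (f₁ : A₁ ⟶ A₂) (f₂ : A₂ ⟶ A₀⟦(1 : ℤ)⟧)
    (hT : Triangle.mk f₀ f₁ f₂ ∈ distTriang C)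
    (hf₂ : FactorsThru X f₂) :
    (quotFunctor X).map f₀ ≫ (quotFunctor X).map f₁ = (quotFunctor X).map (0 : A₀ ⟶ A₂) ∧
    ∀ (Z : C) (φ : (quotFunctor X).obj A₁ ⟶ (quotFunctor X).obj Z),
      (quotFunctor X).map f₀ ≫ φ = (quotFunctor X).map (0 : A₀ ⟶ Z) →
      ∃! ψ : (quotFunctor X).obj A₂ ⟶ (quotFunctor X).obj Z,
        (quotFunctor X).map f₁ ≫ ψ = φ :=
  cokernel_of_factorsThru_general X hX f₀ f₁ f₂ hT hf₂
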